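/- arXiv:1701.03902 — 2 statements merged into one kernel-verified Lean document; each statement's English description precedes it below -/
import Mathlib

section
/- Let A be a Hilbert algebra and φ a multiplier on A. Then φ is monotone (x ≤ y implies φ(x) ≤ φ(y)) if and only if its fixpoint set F_φ = {x ∈ A : φ(x) = x} is a special subset of A. -/
/-- A Hilbert algebra: a set with implication `imp` and constant `one`. -/
class HilbertAlgebra (A : Type*) where
  imp : A → A → A
  one : A
  imp_one : ∀ x y : A, imp x (imp y x) = one
  imp_distrib : ∀ x y z : A,
    imp (imp x (imp y z)) (imp (imp x y) (imp x z)) = one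
  imp_antisymm : ∀ x y : A, imp x y = one → imp y x = one → x = y

namespace HilbertAlgebra

variable {A : Type*} [HilbertAlgebra A]

/-- The natural order of a Hilbert algebra: `x ≤ y` iff `x → y = 1`. -/
def le (x y : A) : Prop := imp x y = one

/-- A multiplier on a Hilbert algebra. -/
def IsMultiplier (φ : A → A) : Prop := ∀ x y : A, φ (imp x y) = imp x (φ y)

/-- A special subset of a Hilbert algebra. -/
def IsSpecial (S : Set A) : Prop :=
  ∀ a : A, ∀ b ∈ S, ∃ p : A, imp p a ∈ S ∧ imp p b = b

/- ### Basic lemmas about Hilbert algebras -/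

/-- If `1 → b = 1` then `b = 1`. -/
private theorem eq_one_of_one_imp {b : A} (h : imp one b = one) : b = one := by
  have h1 : imp b (imp one b) = one := imp_one b one
  have h2 : imp (imp one b) b = one := by rw [h]; exact h
  have := imp_antisymm b (imp one b) h1 h2
  rw [this, h]

/-- Modus ponens. -/
private theorem mp {a b : A} (h1 : imp a b = one) (h2 : a = one) : b = one := by
  rw [h2] at h1; exact eq_one_of_one_imp h1

/-- `x → x = 1`. -/
private theorem imp_self (x : A) : imp x x = one := by
  have s : imp (imp x (imp (imp x x) x)) (imp (imp x (imp x x)) (imp x x)) = one :=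
    imp_distrib x (imp x x) x
  have k1 : imp x (imp (imp x x) x) = one := imp_one x (imp x x)
  have h := mp s k1
  exact mp h (imp_one x x)

/-- `x → 1 = 1`. -/
private theorem imp_one_right (x : A) : imp x one = one :=
  eq_one_of_one_imp (imp_one one x)

/-- `1 → x = x`. -/
private theorem one_imp (x : A) : imp one x = x := by
  refine (imp_antisymm (imp one x) x ?_ (imp_one x one)).symm.symm
  have s : imp (imp (imp one x) (imp one x))
      (imp (imp (imp one x) one) (imp (imp one x) x)) = one :=
    imp_distrib (imp one x) one x
  have h := mp s (imp_self (imp one x))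
  exact mp h (imp_one_right (imp one x))

/-- Transitivity of `le`. -/
private theorem le_trans' {x y z : A} (hxy : imp x y = one) (hyz : imp y z = one) :
    imp x z = one := by
  have s := imp_distrib x y z
  rw [hyz, imp_one_right] at s
  have h := eq_one_of_one_imp s
  rw [hxy, one_imp] at h
  exact h

/-- If `p ≤ a → c` then `p → a ≤ p → c`. -/
private theorem le_imp_imp {p a c : A} (h : imp p (imp a c) = one) :
    imp (imp p a) (imp p c) = one := by
  have s := imp_distrib p a c
  rw [h] at s
  exact eq_one_of_one_imp s

/-- Monotone in the consequent: if `b ≤ c` then `a → b ≤ a → c`. -/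
private theorem imp_le_imp_right {b c : A} (h : imp b c = one) (a : A) :
    imp (imp a b) (imp a c) = one :=
  le_imp_imp (by rw [h]; exact imp_one_right a)

/-- Antitone in the antecedent: if `a ≤ b` then `b → c ≤ a → c`. -/
private theorem imp_le_imp_left {a b : A} (h : imp a b = one) (c : A) :
    imp (imp b c) (imp a c) = one := by
  have s := imp_distrib a b c
  rw [h, one_imp] at s
  exact le_trans' (imp_one (imp b c) a) s

/-- Assertion: `a ≤ (a → b) → b`. -/
private theorem le_assertion (a b : A) : imp a (imp (imp a b) b) = one := by
  have s := imp_distrib (imp a b) a b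
  rw [imp_self] at s
  have h := eq_one_of_one_imp s
  exact le_trans' (imp_one a (imp a b)) h

/- ### Multiplier lemmas -/

private theorem phi_one {φ : A → A} (hφ : IsMultiplier φ) : φ one = one := by
  have h := hφ (φ one) one
  rw [imp_one_right] at h
  rw [h, imp_self]

/-- `x ≤ φ x` for a multiplier `φ`. -/
private theorem le_phi {φ : A → A} (hφ : IsMultiplier φ) (x : A) :
    imp x (φ x) = one := by
  have h := hφ x x
  rw [imp_self, phi_one hφ] at h
  exact h.symm

/-- `φ (φ x → x) = 1` for a multiplier `φ`. -/
private theorem phi_phi_imp_self {φ : A → A} (hφ : IsMultiplier φ) (x : A) :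
    φ (imp (φ x) x) = one := by
  rw [hφ, imp_self]

/-- If `φ d = 1` and the fixpoint set of `φ` is special, then `d → f = f`
for every fixpoint `f`. -/
private theorem absorb_of_phi_eq_one {φ : A → A} (hφ : IsMultiplier φ)
    (hS : IsSpecial {x : A | φ x = x}) {d f : A} (hd : φ d = one) (hf : φ f = f) :
    imp d f = f := by
  obtain ⟨p, hp1, hp2⟩ := hS d f hf
  have hpd : imp p d = one := by
    have : φ (imp p d) = imp p d := hp1
    rw [hφ, hd, imp_one_right] at this
    exact this.symm
  have h1 : imp (imp d f) f = one := by
    have := imp_le_imp_left hpd f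
    rw [hp2] at this
    exact this
  exact imp_antisymm (imp d f) f h1 (imp_one f d)

/- ### Main theorem -/

/-- A multiplier is monotone iff its fixpoint set is special. -/
theorem multiplier_monotone_iff_fixpoints_special (φ : A → A) (hφ : IsMultiplier φ) :
    (∀ x y : A, le x y → le (φ x) (φ y)) ↔
      IsSpecial {x : A | φ x = x} := by
  constructor
  · -- monotone → special
    intro hm a b hb
    have hb' : φ b = b := hb
    refine ⟨imp (φ a) a, ?_, ?_⟩
    · -- `(φ a → a) → a` is a fixpoint
      show φ (imp (imp (φ a) a) a) = imp (imp (φ a) a) a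
      rw [hφ]
      refine imp_antisymm _ _ ?_ ?_
      · exact le_imp_imp (imp_self (imp (φ a) a))
      · exact imp_le_imp_right (le_phi hφ a) (imp (φ a) a)
    · -- `(φ a → a) → b = b`
      set p := imp (φ a) a with hp
      have h1 : le p (imp (imp p b) b) := le_assertion p b
      have h2 := hm _ _ h1
      unfold le at h2
      rw [show φ p = one from phi_phi_imp_self hφ a] at h2
      rw [hφ, hb'] at h2
      have h3 : imp (imp p b) b = one := eq_one_of_one_imp h2
      exact imp_antisymm (imp p b) b h3 (imp_one b p)
  · -- special → monotone
    intro hS x y hxy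
    unfold le at hxy ⊢
    set v := imp (φ x) y with hv
    -- u := φ x → x satisfies φ u = 1 and u ≤ v
    have hu1 : φ (imp (φ x) x) = one := phi_phi_imp_self hφ x
    have huv : imp (imp (φ x) x) v = one := imp_le_imp_right hxy (φ x)
    -- every fixpoint absorbs v
    have absorbV : ∀ f : A, φ f = f → imp v f = f := by
      intro f hf
      have h1 := absorb_of_phi_eq_one hφ hS hu1 hf
      have h2 : imp (imp v f) f = one := by
        have := imp_le_imp_left huv f
        rw [h1] at this
        exact this
      exact imp_antisymm (imp v f) f h2 (imp_one f v)
    -- e := (φ v → v) → v is a fixpoint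
    set e := imp (imp (φ v) v) v with he
    have heF : φ e = e := by
      rw [he, hφ]
      refine imp_antisymm _ _ ?_ ?_
      · exact le_imp_imp (imp_self (imp (φ v) v))
      · exact imp_le_imp_right (le_phi hφ v) (imp (φ v) v)
    -- v ≤ e, hence e = 1
    have hve : imp v e = one := imp_one v (imp (φ v) v)
    have he1 : e = one := by
      have := absorbV e heF
      rw [hve] at this
      exact this.symm
    -- hence φ v → v = v
    have hfix : imp (φ v) v = v := by
      refine imp_antisymm _ _ ?_ (imp_one v (φ v))
      rw [he] at he1
      exact he1
    -- hence φ v = 1, i.e. φ x ≤ φ y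
    have : φ v = one := by
      rw [← hfix, hφ, imp_self]
    rw [hv, hφ] at this
    exact this

end HilbertAlgebra
end

section
/- Let A be an implication algebra. Then every multiplier on A is monotone (x ≤ y implies φ(x) ≤ φ(y)), and hence every multiplier on A is a closure endomorphism of A. -/
namespace HilbertAlgebra

variable {A : Type*} [HilbertAlgebra A]

/-- A closure endomorphism: an endomorphism that is also a closure operator. -/
def IsClosureEndo (φ : A → A) : Prop :=
  (∀ x y : A, φ (imp x y) = imp (φ x) (φ y)) ∧
  (∀ x : A, le x (φ x)) ∧
  (∀ x : A, φ (φ x) = φ x) ∧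
  (∀ x y : A, le x y → le (φ x) (φ y))

section Aux

variable {A : Type*} [HilbertAlgebra A]

private lemma contract (himp : ∀ x y : A, imp (imp x y) x = x) (x y : A) :
    imp x (imp x y) = imp x y := by
  have h := himp (imp x y) x
  rw [himp x y] at h
  exact h

private lemma imp_top (himp : ∀ x y : A, imp (imp x y) x = x) (x : A) :
    imp x one = (one : A) := by
  have h : (one : A) = imp x (imp x x) := (imp_one x x).symm
  rw [h, contract himp, imp_one]

private lemma top_imp (himp : ∀ x y : A, imp (imp x y) x = x) (x : A) :
    imp one x = x := by
  have h := himp x one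
  rwa [imp_top himp] at h

private lemma refl' (himp : ∀ x y : A, imp (imp x y) x = x) (x : A) :
    imp x x = (one : A) := by
  have h := imp_distrib x one x
  rw [imp_one, top_imp himp, imp_top himp, top_imp himp] at h
  exact h

private lemma le_trans'_s7 (himp : ∀ x y : A, imp (imp x y) x = x)
    {a b c : A} (hab : imp a b = one) (hbc : imp b c = one) :
    imp a c = one := by
  have h := imp_distrib a b c
  rw [hbc, imp_top himp, top_imp himp, hab, top_imp himp] at h
  exact h

private lemma anti1 (himp : ∀ x y : A, imp (imp x y) x = x)
    {a b : A} (hab : imp a b = one) (c : A) :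
    imp (imp b c) (imp a c) = one := by
  have h := imp_distrib a b c
  rw [hab, top_imp himp] at h
  exact le_trans'_s7 himp (imp_one (imp b c) a) h

private lemma mono2 (himp : ∀ x y : A, imp (imp x y) x = x)
    {b c : A} (hbc : imp b c = one) (a : A) :
    imp (imp a b) (imp a c) = one := by
  have h := imp_distrib a b c
  rw [hbc, imp_top himp, top_imp himp] at h
  exact h

private lemma exchange (himp : ∀ x y : A, imp (imp x y) x = x) (a b c : A) :
    imp a (imp b c) = imp b (imp a c) := by
  have key : ∀ a b c : A, imp (imp a (imp b c)) (imp b (imp a c)) = one := by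
    intro a b c
    exact le_trans'_s7 himp (imp_distrib a b c) (anti1 himp (imp_one b a) (imp a c))
  exact imp_antisymm _ _ (key a b c) (key b a c)

private lemma le_join (himp : ∀ x y : A, imp (imp x y) x = x) (x y : A) :
    imp x (imp (imp x y) y) = one := by
  rw [exchange himp, refl' himp]

private lemma join_eq (himp : ∀ x y : A, imp (imp x y) x = x)
    {x y : A} (hxy : imp x y = one) :
    y = imp (imp y x) x := by
  refine imp_antisymm _ _ (le_join himp y x) ?_
  have h := mono2 himp hxy (imp y x)
  rw [himp y x] at h
  exact h

end Aux

/-- In an implication algebra, every multiplier is monotone, hence a closure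
endomorphism. -/
theorem multiplier_isotone_of_implicationAlgebra
    (himp : ∀ x y : A, imp (imp x y) x = x)
    (φ : A → A) (hφ : IsMultiplier φ) :
    (∀ x y : A, le x y → le (φ x) (φ y)) ∧ IsClosureEndo φ := by
  -- φ 1 = 1
  have phi_one : φ one = one := by
    have h1 : φ one = imp (φ one) (φ one) := by
      have := hφ (φ one) one
      rwa [imp_top himp] at this
    rw [h1, refl' himp]
  -- extensivity
  have ext : ∀ x : A, le x (φ x) := by
    intro x
    have h := hφ x x
    rw [refl' himp, phi_one] at h
    exact h.symm
  -- monotonicity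
  have mono : ∀ x y : A, le x y → le (φ x) (φ y) := by
    intro x y hxy
    have hy : y = imp (imp y x) x := join_eq himp hxy
    have h : φ y = imp (imp y x) (φ x) := by
      conv_lhs => rw [hy]
      exact hφ (imp y x) x
    show imp (φ x) (φ y) = one
    rw [h]
    exact imp_one (φ x) (imp y x)
  -- idempotence
  have idem : ∀ x : A, φ (φ x) = φ x := by
    intro x
    have hx : φ x = imp (imp (φ x) x) x := join_eq himp (ext x)
    calc φ (φ x) = φ (imp (imp (φ x) x) x) := by rw [← hx]
      _ = imp (imp (φ x) x) (φ x) := hφ _ x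
      _ = φ x := himp (φ x) x
  -- endomorphism property
  have endo : ∀ x y : A, φ (imp x y) = imp (φ x) (φ y) := by
    intro x y
    rw [hφ x y]
    refine imp_antisymm _ _ ?_ (anti1 himp (ext x) (φ y))
    -- x⇒φy ≤ φx⇒φy
    set t := imp (imp x (φ y)) (φ y) with ht
    have hxt : imp x t = one := le_join himp x (φ y)
    have hfix : φ t = t := by
      rw [ht, hφ (imp x (φ y)) (φ y), idem y]
    have h1 : imp (φ x) t = one := by
      have := mono x t hxt
      rwa [hfix] at this
    rw [exchange himp]
    exact h1
  exact ⟨mono, endo, ext, idem, mono⟩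

end HilbertAlgebra
end
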